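/- Let a ≠ 0, δ = (4ω₂−ω₁)/(2a), and let N_KdV5 be the 4×4 matrix-valued map on ℝ⁴ with rows (2x−δ, y, 0, p_y), (y, 0, −p_y, 0), (0, 0, 2x−δ, y), (0, 0, y, 0). Then the coordinate Nijenhuis torsion of N_KdV5 vanishes identically on ℝ⁴. -/
import Mathlib


open Matrix

/-- Partial derivative `∂f/∂z^l` at `z`, coordinates `z = (p_x, p_y, x, y)`. -/
noncomputable def pd (l : Fin 4) (f : (Fin 4 → ℝ) → ℝ) (z : Fin 4 → ℝ) : ℝ :=
  fderiv ℝ f z (Pi.single l 1)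

/-- Coordinate Nijenhuis torsion of a matrix-valued map on ℝ⁴. -/
noncomputable def nijenhuis (N : (Fin 4 → ℝ) → Matrix (Fin 4) (Fin 4) ℝ)
    (z : Fin 4 → ℝ) (i j k : Fin 4) : ℝ :=
  ∑ l, (N z l j * pd l (fun w => N w i k) z - N z l k * pd l (fun w => N w i j) z
      - N z i l * pd j (fun w => N w l k) z + N z i l * pd k (fun w => N w l j) z)

/-- The KdV₅ recursion operator, with `δ = (4ω₂−ω₁)/(2a)`, as a matrix-valued map on ℝ⁴
with coordinates `z = (p_x, p_y, x, y)`. -/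
noncomputable def NKdV5 (a ω₁ ω₂ : ℝ) (z : Fin 4 → ℝ) : Matrix (Fin 4) (Fin 4) ℝ :=
  let δ := (4*ω₂ - ω₁)/(2*a)
  let py := z 1; let x := z 2; let y := z 3
  !![2*x - δ, y, 0, py;
     y, 0, -py, 0;
     0, 0, 2*x - δ, y;
     0, 0, y, 0]

lemma pd_const (l : Fin 4) (c : ℝ) (z : Fin 4 → ℝ) : pd l (fun _ => c) z = 0 := by
  simp [pd]

lemma pd_coord (l m : Fin 4) (z : Fin 4 → ℝ) :
    pd l (fun w => w m) z = if l = m then 1 else 0 := by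
  have h : fderiv ℝ (fun w : Fin 4 → ℝ => w m) z = ContinuousLinearMap.proj m :=
    (ContinuousLinearMap.proj m : (Fin 4 → ℝ) →L[ℝ] ℝ).fderiv
  simp [pd, h, Pi.single_apply, eq_comm]

lemma pd_neg_coord (l m : Fin 4) (z : Fin 4 → ℝ) :
    pd l (fun w => -w m) z = if l = m then -1 else 0 := by
  have : pd l (fun w => -w m) z = -pd l (fun w => w m) z := by
    simp only [pd, fderiv_neg]; simp
  rw [this, pd_coord]; split <;> simp

lemma pd_two_sub (l : Fin 4) (d : ℝ) (z : Fin 4 → ℝ) :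
    pd l (fun w => 2 * w 2 - d) z = if l = 2 then 2 else 0 := by
  have h1 : DifferentiableAt ℝ (fun w : Fin 4 → ℝ => w 2) z :=
    (ContinuousLinearMap.proj 2 : (Fin 4 → ℝ) →L[ℝ] ℝ).differentiableAt
  have : pd l (fun w => 2 * w 2 - d) z = 2 * pd l (fun w => w 2) z := by
    simp only [pd, sub_eq_add_neg]
    rw [fderiv_add_const, fderiv_const_mul h1]
    simp
  rw [this, pd_coord]; split <;> simp

set_option maxHeartbeats 1000000 in
/-- the coordinate Nijenhuis torsion of `N_KdV5` vanishes identically on ℝ⁴. -/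
theorem NKdV5_torsionless (a ω₁ ω₂ : ℝ) (ha : a ≠ 0) (z : Fin 4 → ℝ) (i j k : Fin 4) :
    nijenhuis (NKdV5 a ω₁ ω₂) z i j k = 0 := by
  have h4 : ∀ m : Fin 4, m = 0 ∨ m = 1 ∨ m = 2 ∨ m = 3 := by decide
  rcases h4 i with rfl | rfl | rfl | rfl <;> rcases h4 j with rfl | rfl | rfl | rfl <;>
    rcases h4 k with rfl | rfl | rfl | rfl <;>
  · simp only [nijenhuis, NKdV5, Fin.sum_univ_four, Matrix.cons_val', Matrix.cons_val_zero,
      Matrix.cons_val_one, Matrix.head_cons, Matrix.head_fin_const, Matrix.empty_val',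
      Matrix.cons_val_fin_one, Matrix.of_apply, Matrix.cons_val_two, Matrix.cons_val_three,
      Matrix.tail_cons, pd_const, pd_coord, pd_neg_coord, pd_two_sub]
    simp
    try ring
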